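/- If (A,C,ψ,x) is cleft, with λ ∈ Q' convolution invertible with inverse λ⁻¹, then λ⁻¹(x) ∈ B', the element Λ := λ # i(λ⁻¹(x)) (i.e. Λ(c) = λ(c)·λ⁻¹(x)) belongs to Q', and Λ(x) = 1_A. (Hence the map τ' of the Morita context associated to (A,C,ψ,x) is surjective.) -/
import Mathlib


open TensorProduct

noncomputable section

variable {k A C : Type*} [CommRing k] [Ring A] [Algebra k A]
  [AddCommGroup C] [Module k C] [Coalgebra k C]

/-- An entwining structure `(A, C, ψ)`. -/
structure IsEntwining (k : Type*) {A C : Type*} [CommRing k] [Ring A] [Algebra k A]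
    [AddCommGroup C] [Module k C] [Coalgebra k C]
    (ψ : C ⊗[k] A →ₗ[k] A ⊗[k] C) : Prop where
  mul_compat : ψ ∘ₗ LinearMap.lTensor C (LinearMap.mul' k A) =
    LinearMap.rTensor C (LinearMap.mul' k A) ∘ₗ (TensorProduct.assoc k A A C).symm.toLinearMap ∘ₗ
      LinearMap.lTensor A ψ ∘ₗ (TensorProduct.assoc k A C A).toLinearMap ∘ₗ
      LinearMap.rTensor A ψ ∘ₗ (TensorProduct.assoc k C A A).symm.toLinearMap
  one_compat : ∀ c : C, ψ (c ⊗ₜ[k] 1) = 1 ⊗ₜ[k] c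
  comul_compat : LinearMap.lTensor A Coalgebra.comul ∘ₗ ψ =
    (TensorProduct.assoc k A C C).toLinearMap ∘ₗ LinearMap.rTensor C ψ ∘ₗ
      (TensorProduct.assoc k C A C).symm.toLinearMap ∘ₗ LinearMap.lTensor C ψ ∘ₗ
      (TensorProduct.assoc k C C A).toLinearMap ∘ₗ LinearMap.rTensor A Coalgebra.comul
  counit_compat : ∀ (c : C) (a : A),
    TensorProduct.rid k A (LinearMap.lTensor A Coalgebra.counit (ψ (c ⊗ₜ[k] a))) =
      (Coalgebra.counit (R := k) c) • a

/-- The smash product multiplication on `Hom_k(C,A)`: `(f # g)(c) = f(c₂)_ψ g((c₁)^ψ)`. -/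
def smashMul (ψ : C ⊗[k] A →ₗ[k] A ⊗[k] C) (f g : C →ₗ[k] A) : C →ₗ[k] A :=
  LinearMap.mul' k A ∘ₗ LinearMap.lTensor A g ∘ₗ ψ ∘ₗ LinearMap.lTensor C f ∘ₗ Coalgebra.comul

/-- The unit of `#(C,A)`: `c ↦ ε(c) 1_A`. -/
def smashOne (k : Type*) (A C : Type*) [CommRing k] [Ring A] [Algebra k A]
    [AddCommGroup C] [Module k C] [Coalgebra k C] : C →ₗ[k] A :=
  Algebra.linearMap k A ∘ₗ Coalgebra.counit

/-- The ring morphism `i : A → #(C,A)`, `i(a)(c) = ε(c) a`. -/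
def smashIota (k : Type*) {A : Type*} (C : Type*) [CommRing k] [Ring A] [Algebra k A]
    [AddCommGroup C] [Module k C] [Coalgebra k C] (a : A) : C →ₗ[k] A :=
  (Coalgebra.counit : C →ₗ[k] k).smulRight a


/-- Convolution product on `Hom_k(C,A)`: `(f * g)(c) = f(c₁) g(c₂)`. -/
def conv (f g : C →ₗ[k] A) : C →ₗ[k] A :=
  LinearMap.mul' k A ∘ₗ TensorProduct.map f g ∘ₗ Coalgebra.comul

/-- `q ∈ Q'` iff `q(c₂)_ψ ⊗ (c₁)^ψ = q(c) ⊗ x` for all `c`. -/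
def QprimeCond (ψ : C ⊗[k] A →ₗ[k] A ⊗[k] C) (x : C) (q : C →ₗ[k] A) : Prop :=
  ∀ c : C, ψ (LinearMap.lTensor C q (Coalgebra.comul c)) = q c ⊗ₜ[k] x

private lemma aux_mulLeft (a : A) (z : A ⊗[k] C) :
    LinearMap.rTensor C (LinearMap.mul' k A)
      ((TensorProduct.assoc k A A C).symm (a ⊗ₜ[k] z)) =
    LinearMap.rTensor C (LinearMap.mulLeft k a) z := by
  induction z using TensorProduct.induction_on with
  | zero => simp
  | tmul b c => simp
  | add y z hy hz => simp [tmul_add, map_add, hy, hz]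

private lemma aux_cancel {a b : A} (h : a * b = 1) (z : A ⊗[k] C) :
    LinearMap.rTensor C (LinearMap.mulLeft k a)
      (LinearMap.rTensor C (LinearMap.mulLeft k b) z) = z := by
  induction z using TensorProduct.induction_on with
  | zero => simp
  | tmul c d => simp [← mul_assoc, h]
  | add y z hy hz => simp [map_add, hy, hz]

private lemma aux_mulRight (b : A) (z : C ⊗[k] A) :
    LinearMap.lTensor C (LinearMap.mulRight k b) z =
    LinearMap.lTensor C (LinearMap.mul' k A)
      ((TensorProduct.assoc k C A A) (z ⊗ₜ[k] b)) := by
  induction z using TensorProduct.induction_on with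
  | zero => simp
  | tmul c a => simp
  | add y z hy hz => simp [add_tmul, map_add, hy, hz]

/-- If `(A,C,ψ,x)` is cleft (with `λ ∈ Q'` convolution invertible), then
`λ⁻¹(x) ∈ B'`, `Λ = λ # i(λ⁻¹(x))` belongs to `Q'`, and `Λ(x) = 1`. -/
theorem cleft_gives_Lambda (ψ : C ⊗[k] A →ₗ[k] A ⊗[k] C) (hψ : IsEntwining k ψ)
    (x : C) (hx1 : Coalgebra.comul (R := k) x = x ⊗ₜ[k] x)
    (hx2 : Coalgebra.counit (R := k) x = (1 : k))
    (lam lamInv : C →ₗ[k] A)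
    (hinv1 : ∀ c : C, conv lam lamInv c = (Coalgebra.counit (R := k) c) • (1 : A))
    (hinv2 : ∀ c : C, conv lamInv lam c = (Coalgebra.counit (R := k) c) • (1 : A))
    (hlam : QprimeCond ψ x lam) :
    -- λ⁻¹(x) ∈ B'
    (ψ (x ⊗ₜ[k] lamInv x) = lamInv x ⊗ₜ[k] x) ∧
    -- Λ = λ # i(λ⁻¹(x)), i.e. Λ(c) = λ(c) λ⁻¹(x), belongs to Q'
    QprimeCond ψ x (LinearMap.mulRight k (lamInv x) ∘ₗ lam) ∧
    -- Λ(x) = 1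
    ((LinearMap.mulRight k (lamInv x) ∘ₗ lam) x = (1 : A)) := by

  have hb1 : lam x * lamInv x = 1 := by
    have h := hinv1 x
    simp only [conv, LinearMap.comp_apply, hx1, hx2, TensorProduct.map_tmul,
      LinearMap.mul'_apply, one_smul] at h
    exact h
  have hb2 : lamInv x * lam x = 1 := by
    have h := hinv2 x
    simp only [conv, LinearMap.comp_apply, hx1, hx2, TensorProduct.map_tmul,
      LinearMap.mul'_apply, one_smul] at h
    exact h
  have hpsix : ψ (x ⊗ₜ[k] lam x) = lam x ⊗ₜ[k] x := by
    have h := hlam x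
    rwa [hx1, LinearMap.lTensor_tmul] at h
  have hkey : (1 : A) ⊗ₜ[k] x =
      LinearMap.rTensor C (LinearMap.mulLeft k (lam x)) (ψ (x ⊗ₜ[k] lamInv x)) := by
    have h := LinearMap.congr_fun hψ.mul_compat (x ⊗ₜ[k] (lam x ⊗ₜ[k] lamInv x))
    simp only [LinearMap.comp_apply, LinearEquiv.coe_coe] at h
    rw [LinearMap.lTensor_tmul, LinearMap.mul'_apply, hb1, hψ.one_compat,
      TensorProduct.assoc_symm_tmul, LinearMap.rTensor_tmul, hpsix,
      TensorProduct.assoc_tmul, LinearMap.lTensor_tmul, aux_mulLeft] at h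
    exact h
  have goal1 : ψ (x ⊗ₜ[k] lamInv x) = lamInv x ⊗ₜ[k] x := by
    have h2 := congrArg (LinearMap.rTensor C (LinearMap.mulLeft k (lamInv x))) hkey
    rw [aux_cancel hb2, LinearMap.rTensor_tmul, LinearMap.mulLeft_apply, mul_one] at h2
    exact h2.symm
  refine ⟨goal1, ?_, ?_⟩
  · intro c
    rw [LinearMap.lTensor_comp, LinearMap.comp_apply, aux_mulRight]
    have h := LinearMap.congr_fun hψ.mul_compat
      ((TensorProduct.assoc k C A A) ((LinearMap.lTensor C lam (Coalgebra.comul c)) ⊗ₜ[k] lamInv x))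
    simp only [LinearMap.comp_apply, LinearEquiv.coe_coe, LinearEquiv.symm_apply_apply] at h
    rw [LinearMap.rTensor_tmul, hlam c, TensorProduct.assoc_tmul, LinearMap.lTensor_tmul,
      goal1, TensorProduct.assoc_symm_tmul, LinearMap.rTensor_tmul, LinearMap.mul'_apply] at h
    rw [h]
    simp
  · simp only [LinearMap.comp_apply, LinearMap.mulRight_apply]
    exact hb1


end
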